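/- Suppose for each letter i ∈ {1,…,d} there exists μ_i ∈ Λ* with μ_i i ∉ Λ*. If a is an operator in the C*-algebra A generated by {T_μ^*T_μ : μ ∈ Λ*} (including I) such that a T_i = 0 for all i = 1,…,d, then a = λ P_∅ for some scalar λ ∈ ℂ. -/

import Mathlib

open ContinuousLinearMap

/-- A factorial language on `d` letters: the empty word belongs to it and it is closed
under taking factors (subwords of consecutive letters). -/
def IsFactorialLang {d : ℕ} (Λ : Set (List (Fin d))) : Prop :=
  [] ∈ Λ ∧ ∀ u v w : List (Fin d), u ++ v ++ w ∈ Λ → v ∈ Λ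

noncomputable section

variable {d : ℕ} {H : Type*} [NormedAddCommGroup H] [InnerProductSpace ℂ H] [CompleteSpace H]

/-- The operator `T_μ = T_{μ₁} ⋯ T_{μₙ}` associated with a word `μ`, with `T_∅ = I`. -/
def Tw (T : Fin d → H →L[ℂ] H) : List (Fin d) → H →L[ℂ] H
  | [] => 1
  | i :: μ => T i * Tw T μ

/-- The defining property of the shift operators of the language `Λ` with respect to the
orthonormal (Hilbert) basis `e` indexed by the words of `Λ`:
`T_i e_ν = e_{iν}` if `iν ∈ Λ` and `T_i e_ν = 0` otherwise. -/
def IsShift {d : ℕ} (Λ : Set (List (Fin d))) (e : HilbertBasis {ν : List (Fin d) // ν ∈ Λ} ℂ H)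
    (T : Fin d → H →L[ℂ] H) : Prop :=
  ∀ (i : Fin d) (ν : {ν : List (Fin d) // ν ∈ Λ}),
    (∀ h : (i :: ν.1) ∈ Λ, T i (e ν) = e ⟨i :: ν.1, h⟩) ∧
    ((i :: ν.1) ∉ Λ → T i (e ν) = 0)

/-! Each generator `T_ρ^* T_ρ` (`ρ ∈ Λ`) is self-adjoint and fixes `e_∅`, so it commutes with the
rank-one projection `P_∅`; hence so does every element of the closed star algebra they generate,
and `a e_∅ = a P_∅ e_∅ = P_∅ a e_∅ ∈ ℂ e_∅`. Every other basis vector has the form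
`e_{iν} = T_i e_ν`, which `a` kills because `a T_i = 0`. -/

open scoped InnerProductSpace

namespace HilbertBasis

variable {ι 𝕜 E F : Type*} [RCLike 𝕜] [NormedAddCommGroup E] [InnerProductSpace 𝕜 E]
  [NormedAddCommGroup F] [InnerProductSpace 𝕜 F]

theorem ext_inner (b : HilbertBasis ι 𝕜 E) {x y : E} (h : ∀ i, ⟪b i, x⟫_𝕜 = ⟪b i, y⟫_𝕜) :
    x = y :=
  b.repr.injective <| lp.ext <| funext fun i => by simpa only [b.repr_apply_apply] using h i

theorem continuousLinearMap_ext (b : HilbertBasis ι 𝕜 E) {f g : E →L[𝕜] F}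
    (h : ∀ i, f (b i) = g (b i)) : f = g :=
  ContinuousLinearMap.ext_on (Submodule.dense_iff_topologicalClosure_eq_top.mpr b.dense_span)
    (by rintro _ ⟨i, rfl⟩; exact h i)

end HilbertBasis

theorem ContinuousLinearMap.commute_smulRight_innerSL_of_isSelfAdjoint {𝕜 E : Type*} [RCLike 𝕜]
    [NormedAddCommGroup E] [InnerProductSpace 𝕜 E] [CompleteSpace E] {x : E →L[𝕜] E}
    (hx : IsSelfAdjoint x) {v : E} (hv : x v = v) :
    Commute x ((innerSL 𝕜 v).smulRight v) := by
  ext y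
  simp only [mul_apply_eq_comp, smulRight_apply, innerSL_apply_apply, map_smul, hv]
  rw [← adjoint_inner_left, hx.adjoint_eq, hv]

theorem ContinuousLinearMap.apply_eq_inner_smul_of_commute_smulRight_innerSL {𝕜 E : Type*}
    [RCLike 𝕜] [NormedAddCommGroup E] [InnerProductSpace 𝕜 E] {a : E →L[𝕜] E} {v : E}
    (hv : ‖v‖ = 1) (ha : Commute ((innerSL 𝕜 v).smulRight v) a) : a v = ⟪v, a v⟫_𝕜 • v := by
  have hPv : (innerSL 𝕜 v).smulRight v v = v := by
    rw [smulRight_apply, innerSL_apply_apply, inner_self_eq_norm_sq_to_K, hv]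
    simp
  calc a v = a ((innerSL 𝕜 v).smulRight v v) := by rw [hPv]
    _ = (innerSL 𝕜 v).smulRight v (a v) := by rw [← mul_apply_eq_comp, ← ha.eq, mul_apply_eq_comp]
    _ = ⟪v, a v⟫_𝕜 • v := rfl

section Shift

variable {Λ : Set (List (Fin d))} {e : HilbertBasis {ν : List (Fin d) // ν ∈ Λ} ℂ H}
  {T : Fin d → H →L[ℂ] H}

theorem IsFactorialLang.of_cons_mem (hΛ : IsFactorialLang Λ)
    {i : Fin d} {ν : List (Fin d)} (h : i :: ν ∈ Λ) : ν ∈ Λ :=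
  hΛ.2 [i] ν [] (by simpa using h)

omit [CompleteSpace H] in
open Classical in
theorem Tw_apply_basis (hΛ : IsFactorialLang Λ) (hT : IsShift Λ e T) (ρ : List (Fin d))
    (ν : {ν : List (Fin d) // ν ∈ Λ}) :
    Tw T ρ (e ν) = if h : ρ ++ ν.1 ∈ Λ then e ⟨ρ ++ ν.1, h⟩ else 0 := by
  induction ρ with
  | nil => simp [Tw, ν.2]
  | cons i ρ ih =>
    change T i (Tw T ρ (e ν)) = _
    rw [ih]
    by_cases hρν : ρ ++ ν.1 ∈ Λ
    · by_cases hiρν : i :: (ρ ++ ν.1) ∈ Λ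
      · simpa [hρν, hiρν] using (hT i ⟨_, hρν⟩).1 hiρν
      · simpa [hρν, hiρν] using (hT i ⟨_, hρν⟩).2 hiρν
    · have : i :: (ρ ++ ν.1) ∉ Λ := fun h => hρν (hΛ.of_cons_mem h)
      simp [hρν, this]

theorem adjoint_Tw_apply_basis_append (hΛ : IsFactorialLang Λ) (hT : IsShift Λ e T)
    (ρ : List (Fin d)) (ν : {ν : List (Fin d) // ν ∈ Λ}) (h : ρ ++ ν.1 ∈ Λ) :
    adjoint (Tw T ρ) (e ⟨ρ ++ ν.1, h⟩) = e ν := by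
  have ortho := orthonormal_iff_ite.mp e.orthonormal
  refine e.ext_inner fun ω => ?_
  rw [adjoint_inner_right, Tw_apply_basis hΛ hT, ortho]
  by_cases hω : ρ ++ ω.1 ∈ Λ
  · simp only [dif_pos hω, ortho, Subtype.ext_iff, List.append_cancel_left_eq]
  · have : ω ≠ ν := by rintro rfl; exact hω h
    simp [hω, this]

theorem adjoint_Tw_mul_Tw_apply_nil (hΛ : IsFactorialLang Λ) (hT : IsShift Λ e T)
    {ρ : List (Fin d)} (hρ : ρ ∈ Λ) :
    (adjoint (Tw T ρ) * Tw T ρ) (e ⟨[], hΛ.1⟩) = e ⟨[], hΛ.1⟩ := by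
  have h : ρ ++ [] ∈ Λ := by simpa using hρ
  rw [mul_apply_eq_comp, Tw_apply_basis hΛ hT, dif_pos h, adjoint_Tw_apply_basis_append hΛ hT]

theorem projection_nil_mem_centralizer (hΛ : IsFactorialLang Λ) (hT : IsShift Λ e T) :
    (innerSL ℂ (e ⟨[], hΛ.1⟩)).smulRight (e ⟨[], hΛ.1⟩) ∈ StarSubalgebra.centralizer ℂ
      {x : H →L[ℂ] H | ∃ ρ ∈ Λ, x = adjoint (Tw T ρ) * Tw T ρ} := by
  rw [StarSubalgebra.mem_centralizer_iff]
  rintro _ ⟨ρ, hρ, rfl⟩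
  have hsa : IsSelfAdjoint (adjoint (Tw T ρ) * Tw T ρ) := IsSelfAdjoint.star_mul_self _
  rw [hsa.star_eq, and_self]
  exact ContinuousLinearMap.commute_smulRight_innerSL_of_isSelfAdjoint hsa
    (adjoint_Tw_mul_Tw_apply_nil hΛ hT hρ)

omit [CompleteSpace H] in
theorem apply_basis_eq_zero_of_mul_shift_eq_zero (hΛ : IsFactorialLang Λ) (hT : IsShift Λ e T)
    {a : H →L[ℂ] H} (ha0 : ∀ i : Fin d, a * T i = 0) (ν : {ν : List (Fin d) // ν ∈ Λ})
    (hν : ν.1 ≠ []) : a (e ν) = 0 := by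
  obtain ⟨_ | ⟨i, ν⟩, hiν⟩ := ν
  · exact absurd rfl hν
  rw [← (hT i ⟨ν, hΛ.of_cons_mem hiν⟩).1 hiν, ← mul_apply_eq_comp, ha0 i, zero_apply]

end Shift

theorem stmt17_general (Λ : Set (List (Fin d))) (hΛ : IsFactorialLang Λ)
    (e : HilbertBasis {ν : List (Fin d) // ν ∈ Λ} ℂ H)
    (T : Fin d → H →L[ℂ] H) (hT : IsShift Λ e T)
    (a : H →L[ℂ] H)
    (ha : a ∈ (StarAlgebra.adjoin ℂ
      {x : H →L[ℂ] H | ∃ ρ ∈ Λ, x = adjoint (Tw T ρ) * Tw T ρ}).topologicalClosure)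
    (ha0 : ∀ i : Fin d, a * T i = 0) :
    ∃ c : ℂ, a = c • (innerSL ℂ (e ⟨[], hΛ.1⟩)).smulRight (e ⟨[], hΛ.1⟩) := by
  set e₀ := e ⟨[], hΛ.1⟩
  have hcomm : Commute ((innerSL ℂ e₀).smulRight e₀) a :=
    ((StarSubalgebra.mem_centralizer_iff ℂ).mp
      (StarSubalgebra.topologicalClosure_adjoin_le_centralizer_centralizer ℂ _ ha) _
      (projection_nil_mem_centralizer hΛ hT)).1
  refine ⟨⟪e₀, a e₀⟫_ℂ, e.continuousLinearMap_ext fun ν => ?_⟩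
  rw [smul_apply, smulRight_apply, innerSL_apply_apply, orthonormal_iff_ite.mp e.orthonormal]
  by_cases hν : ν = ⟨[], hΛ.1⟩
  · rw [hν, if_pos rfl, one_smul]
    exact apply_eq_inner_smul_of_commute_smulRight_innerSL (e.orthonormal.1 _) hcomm
  · rw [if_neg (Ne.symm hν), zero_smul, smul_zero]
    exact apply_basis_eq_zero_of_mul_shift_eq_zero hΛ hT ha0 ν fun h => hν (Subtype.ext h)

/-- Suppose that for each letter `i` there is `μ_i ∈ Λ*` with `μ_i i ∉ Λ*`.  If `a` lies
in the C*-algebra generated by `{T_μ^*T_μ : μ ∈ Λ*}` (and `I`) and `a T_i = 0` for all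
`i`, then `a = λ P_∅` for some scalar `λ`. -/
theorem stmt17 (Λ : Set (List (Fin d))) (hΛ : IsFactorialLang Λ)
    (e : HilbertBasis {ν : List (Fin d) // ν ∈ Λ} ℂ H)
    (T : Fin d → H →L[ℂ] H) (hT : IsShift Λ e T)
    (μ : Fin d → List (Fin d)) (hμΛ : ∀ i, μ i ∈ Λ) (hμi : ∀ i, μ i ++ [i] ∉ Λ)
    (a : H →L[ℂ] H)
    (ha : a ∈ (StarAlgebra.adjoin ℂ
      {x : H →L[ℂ] H | ∃ ρ ∈ Λ, x = adjoint (Tw T ρ) * Tw T ρ}).topologicalClosure)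
    (ha0 : ∀ i : Fin d, a * T i = 0) :
    ∃ c : ℂ, a = c • (innerSL ℂ (e ⟨[], hΛ.1⟩)).smulRight (e ⟨[], hΛ.1⟩) :=
  stmt17_general Λ hΛ e T hT a ha ha0
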